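/- arXiv:2008.09865 — 6 statements merged into one kernel-verified Lean document; each statement's English description precedes it below -/
import Mathlib

section
/- (Theorem 1) Let Q and R be Borel probability measures on ℝ^K supported on (0,1]^K. Then the conditional cell probabilities agree, i.e. π̃_{Q,h} = π̃_{R,h} for all h ∈ H*, if and only if there exists a real constant A > 0 such that m_{Q,h} = A·m_{R,h} for all h ∈ H*. Moreover, in that case A = (1−π_{Q,0})/(1−π_{R,0}). -/
open Finset MeasureTheory

/-- The set `H* = {0,1}^K \ {0}` of nonzero binary inclusion patterns. -/
def Hstar (K : ℕ) : Finset (Fin K → Bool) :=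
  Finset.univ.filter (fun h => h ≠ fun _ => false)

/-- The cell probability `π_{Q,h} = E_Q[∏_k λ_k^{h_k} (1-λ_k)^{1-h_k}]`. -/
noncomputable def cellProb {K : ℕ} (Q : Measure (Fin K → ℝ)) (h : Fin K → Bool) : ℝ :=
  ∫ x, (∏ k, (if h k then x k else 1 - x k)) ∂Q

/-- The missing cell probability `π_{Q,0}`. -/
noncomputable def missProb {K : ℕ} (Q : Measure (Fin K → ℝ)) : ℝ :=
  cellProb Q (fun _ => false)

/-- The conditional cell probability `π̃_{Q,h} = π_{Q,h} / (1 − π_{Q,0})`. -/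
noncomputable def condCellProb {K : ℕ} (Q : Measure (Fin K → ℝ)) (h : Fin K → Bool) : ℝ :=
  cellProb Q h / (1 - missProb Q)

/-- The mixed moment `m_{Q,h} = E_Q[∏_k λ_k^{h_k}]`. -/
noncomputable def mixedMoment {K : ℕ} (Q : Measure (Fin K → ℝ)) (h : Fin K → Bool) : ℝ :=
  ∫ x, (∏ k, (if h k then x k else 1)) ∂Q

/-!
Cell probabilities and mixed moments determine each other by Möbius inversion over the
pointwise order of patterns: expanding products gives `m_h = ∑_{g ≥ h} π_g` and
`π_h = ∑_{g ≥ h} (-1)^{|g - h|} m_g`. Every pattern above a nonzero one is nonzero, so both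
relations stay inside `H*`, and hence `π_Q = A • π_R` on `H*` iff `m_Q = A • m_R` on `H*`.
Summing the cell probabilities over `H*` gives `1 - π_0`, which pins down
`A = (1 - π_{Q,0}) / (1 - π_{R,0})`, positive because a support in `(0,1]^K` forces `π_0 < 1`.
-/

section Patterns

variable {ι R : Type*} [Fintype ι]

theorem prod_ite_neg_eq_neg_one_pow_hammingDist_mul [CommRing R] {h g : ι → Bool} (hhg : h ≤ g)
    (x : ι → R) :
    ∏ k, (if g k then (if h k then x k else -x k) else 1) =
      (-1) ^ hammingDist h g * ∏ k, (if g k then x k else 1) := by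
  have hfactor : ∀ k, (if g k then (if h k then x k else -x k) else 1) =
      (if h k ≠ g k then -1 else 1) * (if g k then x k else 1) := fun k => by
    have := hhg k
    cases hh : h k <;> cases hg : g k <;> simp_all [Bool.le_iff_imp]
  simp only [hfactor, prod_mul_distrib, prod_ite, prod_const, one_pow, mul_one, hammingDist]

variable [DecidableEq ι]

def patternsAbove (h : ι → Bool) : Finset (ι → Bool) :=
  Fintype.piFinset fun k => {b | h k ≤ b}

@[simp] theorem mem_patternsAbove {h g : ι → Bool} : g ∈ patternsAbove h ↔ h ≤ g := by
  simp [patternsAbove, Pi.le_def]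

theorem prod_ite_add_eq_sum_patternsAbove [CommSemiring R] (h : ι → Bool) (u v : ι → R) :
    ∏ k, (if h k then u k else u k + v k) =
      ∑ g ∈ patternsAbove h, ∏ k, (if g k then u k else v k) := by
  rw [patternsAbove, ← prod_univ_sum _ fun k (c : Bool) => if c then u k else v k]
  refine prod_congr rfl fun k _ => ?_
  cases h k <;> simp +decide [filter_insert, filter_singleton]

theorem prod_ite_eq_sum_patternsAbove [CommRing R] (h : ι → Bool) (x : ι → R) :
    ∏ k, (if h k then x k else 1) =
      ∑ g ∈ patternsAbove h, ∏ k, (if g k then x k else 1 - x k) := by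
  simpa using prod_ite_add_eq_sum_patternsAbove h x (1 - x)

theorem prod_ite_one_sub_eq_sum_patternsAbove [CommRing R] (h : ι → Bool) (x : ι → R) :
    ∏ k, (if h k then x k else 1 - x k) =
      ∑ g ∈ patternsAbove h, (-1) ^ hammingDist h g * ∏ k, (if g k then x k else 1) := by
  set u : ι → R := fun k => if h k then x k else -x k
  calc ∏ k, (if h k then x k else 1 - x k) = ∏ k, (if h k then u k else u k + 1) :=
        prod_congr rfl fun k _ => by cases hk : h k <;> simp [u, hk, sub_eq_neg_add]
    _ = ∑ g ∈ patternsAbove h, ∏ k, (if g k then u k else 1) :=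
        prod_ite_add_eq_sum_patternsAbove h u 1
    _ = _ := sum_congr rfl fun g hg =>
        prod_ite_neg_eq_neg_one_pow_hammingDist_mul (mem_patternsAbove.1 hg) x

end Patterns

theorem integral_pos_of_ae_pos {α : Type*} [MeasurableSpace α] {μ : Measure α} [NeZero μ]
    {f : α → ℝ} (hfi : Integrable f μ) (hf : ∀ᵐ x ∂μ, 0 < f x) :
    0 < ∫ x, f x ∂μ := by
  have hsupp : Function.support f =ᵐ[μ] Set.univ :=
    Filter.eventuallyEq_univ.2 (hf.mono fun _ hx => hx.ne')
  rw [integral_pos_iff_support_of_nonneg_ae (hf.mono fun _ hx => hx.le) hfi, measure_congr hsupp]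
  exact Measure.measure_univ_pos.2 (NeZero.ne μ)

theorem ae_forall_mem_of_measure_eq_one {ι : Type*} [Countable ι] {Q : Measure (ι → ℝ)}
    [IsProbabilityMeasure Q] {s : Set ℝ} (hs : MeasurableSet s)
    (hQ : Q {x | ∀ k, x k ∈ s} = 1) : ∀ᵐ x ∂Q, ∀ k, x k ∈ s := by
  have hmeas : MeasurableSet {x : ι → ℝ | ∀ k, x k ∈ s} := by
    rw [Set.ofPred_forall]
    exact .iInter fun k => measurable_pi_apply k hs
  exact (ae_mem_iff_measure_eq hmeas.nullMeasurableSet).2 (hQ.trans measure_univ.symm)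

theorem prod_one_sub_lt_one {ι : Type*} [Fintype ι] [Nonempty ι] {x : ι → ℝ}
    (hx : ∀ k, x k ∈ Set.Ioc (0 : ℝ) 1) : ∏ k, (1 - x k) < 1 := by
  obtain ⟨k₀⟩ := ‹Nonempty ι›
  calc ∏ k, (1 - x k) ≤ ∏ k ∈ {k₀}, (1 - x k) :=
        prod_le_prod_of_subset_of_le_one (subset_univ _) (fun k _ => sub_nonneg.2 (hx k).2)
          fun k _ _ => sub_le_self _ (hx k).1.le
    _ < 1 := by simpa using (hx k₀).1

section Moments

variable {K : ℕ} {Q : Measure (Fin K → ℝ)}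

theorem integrable_prod_of_mapsTo_Icc [IsFiniteMeasure Q]
    (hQ : ∀ᵐ x ∂Q, ∀ k, x k ∈ Set.Icc (0 : ℝ) 1) {f : Fin K → ℝ → ℝ}
    (hf_meas : ∀ k, Measurable (f k))
    (hf_maps : ∀ k, Set.MapsTo (f k) (Set.Icc 0 1) (Set.Icc 0 1)) :
    Integrable (fun x => ∏ k, f k (x k)) Q := by
  refine .of_bound (Finset.measurable_prod _ fun k _ =>
    (hf_meas k).comp (measurable_pi_apply k)).aestronglyMeasurable 1 ?_
  filter_upwards [hQ] with x hx
  have hfx : ∀ k ∈ univ, f k (x k) ∈ Set.Icc (0 : ℝ) 1 := fun k _ => hf_maps k (hx k)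
  rw [Real.norm_of_nonneg (prod_nonneg fun k hk => (hfx k hk).1)]
  exact prod_le_one (fun k hk => (hfx k hk).1) fun k hk => (hfx k hk).2

theorem integrable_cellIntegrand [IsFiniteMeasure Q]
    (hQ : ∀ᵐ x ∂Q, ∀ k, x k ∈ Set.Icc (0 : ℝ) 1) (h : Fin K → Bool) :
    Integrable (fun x => ∏ k, (if h k then x k else 1 - x k)) Q :=
  integrable_prod_of_mapsTo_Icc (f := fun k t => if h k then t else 1 - t) hQ
    (fun k => by cases h k <;> simp only [Bool.false_eq_true, ↓reduceIte] <;> fun_prop)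
    fun k t ht => by
      cases h k
      · exact ⟨by simpa using ht.2, by simpa using ht.1⟩
      · exact ht

theorem integrable_monomial [IsFiniteMeasure Q]
    (hQ : ∀ᵐ x ∂Q, ∀ k, x k ∈ Set.Icc (0 : ℝ) 1) (h : Fin K → Bool) :
    Integrable (fun x => ∏ k, (if h k then x k else 1)) Q :=
  integrable_prod_of_mapsTo_Icc (f := fun k t => if h k then t else 1) hQ
    (fun k => by cases h k <;> simp only [Bool.false_eq_true, ↓reduceIte] <;> fun_prop)
    fun k t ht => by
      cases h k
      · simp
      · exact ht

theorem mixedMoment_eq_sum_cellProb [IsFiniteMeasure Q]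
    (hQ : ∀ᵐ x ∂Q, ∀ k, x k ∈ Set.Icc (0 : ℝ) 1) (h : Fin K → Bool) :
    mixedMoment Q h = ∑ g ∈ patternsAbove h, cellProb Q g := by
  simp only [mixedMoment, cellProb, prod_ite_eq_sum_patternsAbove h]
  exact integral_finsetSum _ fun g _ => integrable_cellIntegrand hQ g

theorem cellProb_eq_sum_mixedMoment [IsFiniteMeasure Q]
    (hQ : ∀ᵐ x ∂Q, ∀ k, x k ∈ Set.Icc (0 : ℝ) 1) (h : Fin K → Bool) :
    cellProb Q h = ∑ g ∈ patternsAbove h, (-1) ^ hammingDist h g * mixedMoment Q g := by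
  simp only [cellProb, mixedMoment, prod_ite_one_sub_eq_sum_patternsAbove h, ← integral_const_mul]
  exact integral_finsetSum _ fun g _ => (integrable_monomial hQ g).const_mul _

end Moments

theorem mem_Hstar_of_le {K : ℕ} {h g : Fin K → Bool} (hh : h ∈ Hstar K) (hhg : h ≤ g) :
    g ∈ Hstar K := by
  simp only [Hstar, mem_filter, mem_univ, true_and] at hh ⊢
  rintro rfl
  exact hh (le_bot_iff.1 hhg)

section Probabilities

variable {K : ℕ} {Q R : Measure (Fin K → ℝ)}

theorem sum_cellProb_Hstar [IsProbabilityMeasure Q]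
    (hQ : ∀ᵐ x ∂Q, ∀ k, x k ∈ Set.Icc (0 : ℝ) 1) :
    ∑ h ∈ Hstar K, cellProb Q h = 1 - missProb Q := by
  have htotal : ∑ g, cellProb Q g = 1 := by
    have h0 := mixedMoment_eq_sum_cellProb hQ fun _ => false
    have hall : patternsAbove (fun _ => false : Fin K → Bool) = univ := by ext; simp [Pi.le_def]
    rw [hall, mixedMoment] at h0
    simpa using h0.symm
  rw [Hstar, filter_ne', ← htotal, ← add_sum_erase _ _ (mem_univ _), missProb]
  ring

theorem missProb_lt_one (hK : 0 < K) [IsProbabilityMeasure Q]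
    (hQ : ∀ᵐ x ∂Q, ∀ k, x k ∈ Set.Ioc (0 : ℝ) 1) : missProb Q < 1 := by
  have : Nonempty (Fin K) := ⟨⟨0, hK⟩⟩
  have hint : Integrable (fun x : Fin K → ℝ => ∏ k, (1 - x k)) Q := by
    simpa using integrable_cellIntegrand (hQ.mono fun x hx k => Set.Ioc_subset_Icc_self (hx k))
      fun _ => false
  have hpos : 0 < ∫ x, (1 - ∏ k, (1 - x k)) ∂Q := integral_pos_of_ae_pos
    ((integrable_const 1).sub hint) (hQ.mono fun x hx => sub_pos.2 (prod_one_sub_lt_one hx))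
  rw [integral_sub (integrable_const 1) hint, integral_const] at hpos
  simpa [missProb, cellProb] using hpos

theorem cellProbs_proportional_iff_mixedMoments_proportional [IsFiniteMeasure Q]
    [IsFiniteMeasure R] (hQ : ∀ᵐ x ∂Q, ∀ k, x k ∈ Set.Icc (0 : ℝ) 1)
    (hR : ∀ᵐ x ∂ R, ∀ k, x k ∈ Set.Icc (0 : ℝ) 1) (A : ℝ) :
    (∀ h ∈ Hstar K, cellProb Q h = A * cellProb R h) ↔
      ∀ h ∈ Hstar K, mixedMoment Q h = A * mixedMoment R h := by
  constructor
  · intro hA h hh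
    rw [mixedMoment_eq_sum_cellProb hQ, mixedMoment_eq_sum_cellProb hR, mul_sum]
    exact sum_congr rfl fun g hg => hA g (mem_Hstar_of_le hh (mem_patternsAbove.1 hg))
  · intro hA h hh
    rw [cellProb_eq_sum_mixedMoment hQ, cellProb_eq_sum_mixedMoment hR, mul_sum]
    refine sum_congr rfl fun g hg => ?_
    rw [hA g (mem_Hstar_of_le hh (mem_patternsAbove.1 hg)), mul_left_comm]

theorem one_sub_missProb_eq_mul_of_cellProbs_proportional [IsProbabilityMeasure Q]
    [IsProbabilityMeasure R] (hQ : ∀ᵐ x ∂Q, ∀ k, x k ∈ Set.Icc (0 : ℝ) 1)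
    (hR : ∀ᵐ x ∂ R, ∀ k, x k ∈ Set.Icc (0 : ℝ) 1) {A : ℝ}
    (hA : ∀ h ∈ Hstar K, cellProb Q h = A * cellProb R h) :
    1 - missProb Q = A * (1 - missProb R) := by
  rw [← sum_cellProb_Hstar hQ, ← sum_cellProb_Hstar hR, mul_sum]
  exact sum_congr rfl hA

theorem condCellProb_eq_condCellProb_iff (hQ : 1 - missProb Q ≠ 0) (hR : 1 - missProb R ≠ 0)
    (h : Fin K → Bool) :
    condCellProb Q h = condCellProb R h ↔
      cellProb Q h = (1 - missProb Q) / (1 - missProb R) * cellProb R h := by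
  rw [condCellProb, condCellProb, div_eq_div_iff hQ hR, div_mul_eq_mul_div, eq_div_iff hR,
    mul_comm (cellProb R h)]

end Probabilities

/-- Theorem 1: for Borel probability measures `Q, R` on `ℝ^K`
    supported on `(0,1]^K`, the conditional cell probabilities agree iff the
    mixed moment vectors are positively proportional; moreover the constant of
    proportionality is necessarily `A = (1−π_{Q,0})/(1−π_{R,0})`. -/
theorem condCellProbs_eq_iff_moments_proportional (K : ℕ) (hK : 2 ≤ K)
    (Q R : Measure (Fin K → ℝ)) [IsProbabilityMeasure Q] [IsProbabilityMeasure R]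
    (hsuppQ : Q {x | ∀ k, x k ∈ Set.Ioc (0 : ℝ) 1} = 1)
    (hsuppR : R {x | ∀ k, x k ∈ Set.Ioc (0 : ℝ) 1} = 1) :
    ((∀ h ∈ Hstar K, condCellProb Q h = condCellProb R h) ↔
      ∃ A : ℝ, 0 < A ∧ ∀ h ∈ Hstar K, mixedMoment Q h = A * mixedMoment R h) ∧
    (∀ A : ℝ, 0 < A → (∀ h ∈ Hstar K, mixedMoment Q h = A * mixedMoment R h) →
      A = (1 - missProb Q) / (1 - missProb R)) := by
  have hQ := ae_forall_mem_of_measure_eq_one measurableSet_Ioc hsuppQ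
  have hR := ae_forall_mem_of_measure_eq_one measurableSet_Ioc hsuppR
  have haQ : 0 < 1 - missProb Q := sub_pos.2 (missProb_lt_one (by omega) hQ)
  have haR : 0 < 1 - missProb R := sub_pos.2 (missProb_lt_one (by omega) hR)
  replace hQ := hQ.mono fun x hx k => Set.Ioc_subset_Icc_self (hx k)
  replace hR := hR.mono fun x hx k => Set.Ioc_subset_Icc_self (hx k)
  have hcell := cellProbs_proportional_iff_mixedMoments_proportional hQ hR
  have hcond := condCellProb_eq_condCellProb_iff haQ.ne' haR.ne'
  have hA_eq (A : ℝ) (hA : ∀ h ∈ Hstar K, mixedMoment Q h = A * mixedMoment R h) :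
      A = (1 - missProb Q) / (1 - missProb R) := by
    rw [eq_div_iff haR.ne',
      one_sub_missProb_eq_mul_of_cellProbs_proportional hQ hR ((hcell A).2 hA)]
  refine ⟨⟨fun hcond_eq => ?_, fun ⟨A, _, hA⟩ h hh => ?_⟩, fun A _ hA => hA_eq A hA⟩
  · exact ⟨_, div_pos haQ haR, (hcell _).1 fun g hg => (hcond g).1 (hcond_eq g hg)⟩
  · exact (hcond h).2 (hA_eq A hA ▸ (hcell A).2 hA h hh)
end

section
/- Let 𝒬 be any family of Borel probability measures on ℝ^K, each supported on (0,1]^K. Then 𝒬 is identifiable (i.e., for all Q, R ∈ 𝒬, equality of all conditional cell probabilities π̃_{Q,h} = π̃_{R,h} for h ∈ H* implies π_{Q,0} = π_{R,0}) if and only if for all Q, R ∈ 𝒬 and all real A > 0, the condition m_{Q,h} = A·m_{R,h} for all h ∈ H* implies π_{Q,0} = π_{R,0}. -/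
open Finset MeasureTheory

namespace IdAux

variable {K : ℕ}

/-- cell integrand -/
def cellFn (h : Fin K → Bool) (x : Fin K → ℝ) : ℝ := ∏ k, (if h k then x k else 1 - x k)

/-- moment integrand -/
def momFn (h : Fin K → Bool) (x : Fin K → ℝ) : ℝ := ∏ k, (if h k then x k else 1)

def S (K : ℕ) : Set (Fin K → ℝ) := {x | ∀ k, x k ∈ Set.Ioc (0 : ℝ) 1}

lemma measurableSet_S : MeasurableSet (S K) := by
  have : S K = ⋂ k, (fun x : Fin K → ℝ => x k) ⁻¹' Set.Ioc 0 1 := by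
    ext x; simp [S, Set.mem_iInter]
  rw [this]
  exact MeasurableSet.iInter fun k => (measurable_pi_apply k) measurableSet_Ioc

lemma ae_mem_S (Q : Measure (Fin K → ℝ)) [IsProbabilityMeasure Q] (hs : Q (S K) = 1) :
    ∀ᵐ x ∂Q, x ∈ S K := by
  rw [ae_iff]
  have : {x : Fin K → ℝ | ¬ x ∈ S K} = (S K)ᶜ := rfl
  rw [this, measure_compl measurableSet_S (measure_ne_top _ _), hs]
  simp

lemma continuous_cellFn (h : Fin K → Bool) : Continuous (cellFn h) := by
  apply continuous_finset_prod
  intro k _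
  by_cases hk : h k
  · simp only [hk, if_true]; exact continuous_apply k
  · simp only [if_neg hk]; exact continuous_const.sub (continuous_apply k)

lemma continuous_momFn (h : Fin K → Bool) : Continuous (momFn h) := by
  apply continuous_finset_prod
  intro k _
  by_cases hk : h k
  · simp only [hk, if_true]; exact continuous_apply k
  · simp only [if_neg hk]; exact continuous_const

lemma integrable_cellFn (Q : Measure (Fin K → ℝ)) [IsProbabilityMeasure Q]
    (hs : Q (S K) = 1) (h : Fin K → Bool) : Integrable (cellFn h) Q := by
  refine ⟨(continuous_cellFn h).aestronglyMeasurable, HasFiniteIntegral.of_bounded (C := 1) ?_⟩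
  filter_upwards [ae_mem_S Q hs] with x hx
  rw [Real.norm_eq_abs, cellFn, Finset.abs_prod]
  refine Finset.prod_le_one (fun k _ => abs_nonneg _) (fun k _ => ?_)
  rcases hx k with ⟨h1, h2⟩
  by_cases hk : h k <;> simp [hk, abs_le] <;> constructor <;> linarith

lemma integrable_momFn (Q : Measure (Fin K → ℝ)) [IsProbabilityMeasure Q]
    (hs : Q (S K) = 1) (h : Fin K → Bool) : Integrable (momFn h) Q := by
  refine ⟨(continuous_momFn h).aestronglyMeasurable, HasFiniteIntegral.of_bounded (C := 1) ?_⟩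
  filter_upwards [ae_mem_S Q hs] with x hx
  rw [Real.norm_eq_abs, momFn, Finset.abs_prod]
  refine Finset.prod_le_one (fun k _ => abs_nonneg _) (fun k _ => ?_)
  rcases hx k with ⟨h1, h2⟩
  by_cases hk : h k <;> simp [hk, abs_le] <;> constructor <;> linarith

/-- the set of patterns `g ≥ h` -/
def geSet (h : Fin K → Bool) : Finset (Fin K → Bool) :=
  Fintype.piFinset fun k => if h k then {true} else Finset.univ

lemma mem_geSet {h g : Fin K → Bool} : g ∈ geSet h ↔ ∀ k, h k = true → g k = true := by
  rw [geSet, Fintype.mem_piFinset]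
  apply forall_congr'
  intro k
  by_cases hk : h k <;> simp [hk]

def sgn (h g : Fin K → Bool) : ℝ := ∏ k, (if g k && !h k then (-1 : ℝ) else 1)

lemma momFn_eq_sum (h : Fin K → Bool) (x : Fin K → ℝ) :
    momFn h x = ∑ g ∈ geSet h, cellFn g x := by
  rw [geSet]
  simp only [cellFn]
  rw [momFn, ← Finset.prod_univ_sum (t := fun k => if h k then ({true} : Finset Bool) else Finset.univ)
      (f := fun k b => if b then x k else 1 - x k)]
  apply Finset.prod_congr rfl
  intro k _
  by_cases hk : h k <;> simp [hk, Fintype.sum_bool]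

lemma cellFn_eq_sum (h : Fin K → Bool) (x : Fin K → ℝ) :
    cellFn h x = ∑ g ∈ geSet h, sgn h g * momFn g x := by
  have key := Finset.prod_univ_sum
      (t := fun k => if h k then ({true} : Finset Bool) else Finset.univ)
      (f := fun k b => if b then (if h k then x k else -(x k)) else 1)
  have lhs : cellFn h x =
      ∏ k, ∑ b ∈ (if h k then ({true} : Finset Bool) else Finset.univ),
        (if b then (if h k then x k else -(x k)) else 1) := by
    apply Finset.prod_congr rfl
    intro k _
    by_cases hk : h k <;> simp [hk, Fintype.sum_bool]
    ring
  rw [lhs, key, ← geSet]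
  apply Finset.sum_congr rfl
  intro g _
  rw [sgn, momFn, ← Finset.prod_mul_distrib]
  apply Finset.prod_congr rfl
  intro k _
  cases hg : g k <;> cases hh : h k <;> simp [hg, hh]

lemma cellProb_eq (Q : Measure (Fin K → ℝ)) (h : Fin K → Bool) :
    cellProb Q h = ∫ x, cellFn h x ∂Q := rfl

lemma mixedMoment_eq (Q : Measure (Fin K → ℝ)) (h : Fin K → Bool) :
    mixedMoment Q h = ∫ x, momFn h x ∂Q := rfl

lemma mixedMoment_eq_sum (Q : Measure (Fin K → ℝ)) [IsProbabilityMeasure Q]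
    (hs : Q (S K) = 1) (h : Fin K → Bool) :
    mixedMoment Q h = ∑ g ∈ geSet h, cellProb Q g := by
  rw [mixedMoment_eq]
  have : ∫ x, momFn h x ∂Q = ∫ x, (∑ g ∈ geSet h, cellFn g x) ∂Q := by
    apply integral_congr_ae
    exact Filter.Eventually.of_forall fun x => momFn_eq_sum h x
  rw [this, integral_finset_sum _ (fun g _ => integrable_cellFn Q hs g)]
  rfl

lemma cellProb_eq_sum (Q : Measure (Fin K → ℝ)) [IsProbabilityMeasure Q]
    (hs : Q (S K) = 1) (h : Fin K → Bool) :
    cellProb Q h = ∑ g ∈ geSet h, sgn h g * mixedMoment Q g := by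
  rw [cellProb_eq]
  have : ∫ x, cellFn h x ∂Q = ∫ x, (∑ g ∈ geSet h, sgn h g * momFn g x) ∂Q := by
    apply integral_congr_ae
    exact Filter.Eventually.of_forall fun x => cellFn_eq_sum h x
  rw [this, integral_finset_sum _ (fun g _ => (integrable_momFn Q hs g).const_mul _)]
  apply Finset.sum_congr rfl
  intro g _
  rw [integral_const_mul, mixedMoment_eq]

lemma sum_cellProb (Q : Measure (Fin K → ℝ)) [IsProbabilityMeasure Q]
    (hs : Q (S K) = 1) : ∑ h : Fin K → Bool, cellProb Q h = 1 := by
  have pt : ∀ x : Fin K → ℝ, ∑ h : Fin K → Bool, cellFn h x = 1 := by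
    intro x
    have := Finset.prod_univ_sum (t := fun _ : Fin K => (Finset.univ : Finset Bool))
      (f := fun k b => if b then x k else 1 - x k)
    rw [Fintype.piFinset_univ] at this
    simp only [cellFn]
    rw [← this]
    apply Finset.prod_eq_one
    intro k _
    simp [Fintype.sum_bool]
  have : ∑ h : Fin K → Bool, cellProb Q h
      = ∫ x, (∑ h : Fin K → Bool, cellFn h x) ∂Q := by
    rw [integral_finset_sum _ (fun g _ => integrable_cellFn Q hs g)]
    rfl
  rw [this]
  simp [pt]

lemma sum_Hstar (Q : Measure (Fin K → ℝ)) [IsProbabilityMeasure Q]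
    (hs : Q (S K) = 1) : ∑ h ∈ Hstar K, cellProb Q h = 1 - missProb Q := by
  have h0 : Hstar K = Finset.univ.erase (fun _ => false) := by
    rw [Hstar, Finset.filter_ne']
  rw [h0, eq_sub_iff_add_eq]
  unfold missProb
  rw [Finset.sum_erase_add Finset.univ (cellProb Q)
    (Finset.mem_univ (fun _ : Fin K => false))]
  exact sum_cellProb Q hs

lemma cellProb_nonneg (Q : Measure (Fin K → ℝ)) [IsProbabilityMeasure Q]
    (hs : Q (S K) = 1) (h : Fin K → Bool) : 0 ≤ cellProb Q h := by
  rw [cellProb_eq]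
  apply integral_nonneg_of_ae
  filter_upwards [ae_mem_S Q hs] with x hx
  apply Finset.prod_nonneg
  intro k _
  rcases hx k with ⟨h1, h2⟩
  by_cases hk : h k <;> simp [hk] <;> linarith

lemma cellProb_ones_pos (Q : Measure (Fin K → ℝ)) [IsProbabilityMeasure Q]
    (hs : Q (S K) = 1) : 0 < cellProb Q (fun _ => true) := by
  rw [cellProb_eq]
  rw [integral_pos_iff_support_of_nonneg_ae]
  · refine lt_of_lt_of_le ?_ (measure_mono (?_ : S K ⊆ Function.support (cellFn fun _ => true)))
    · rw [hs]; norm_num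
    · intro x hx
      have : cellFn (fun _ => true) x = ∏ k, x k := by
        rw [cellFn]; simp
      rw [Function.mem_support, this]
      exact ne_of_gt (Finset.prod_pos fun k _ => (hx k).1)
  · filter_upwards [ae_mem_S Q hs] with x hx
    apply Finset.prod_nonneg
    intro k _
    simp
    exact (hx k).1.le
  · exact integrable_cellFn Q hs _

lemma ones_mem_Hstar (hK : 2 ≤ K) : (fun _ => true) ∈ Hstar K := by
  rw [Hstar, Finset.mem_filter]
  refine ⟨Finset.mem_univ _, ?_⟩
  intro hcon
  have := congrFun hcon (⟨0, by omega⟩ : Fin K)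
  simp at this

lemma one_sub_missProb_pos (Q : Measure (Fin K → ℝ)) [IsProbabilityMeasure Q]
    (hs : Q (S K) = 1) (hK : 2 ≤ K) : 0 < 1 - missProb Q := by
  rw [← sum_Hstar Q hs]
  refine lt_of_lt_of_le (cellProb_ones_pos Q hs) ?_
  exact Finset.single_le_sum (fun h _ => cellProb_nonneg Q hs h) (ones_mem_Hstar hK)

lemma geSet_mem_Hstar {h g : Fin K → Bool} (hh : h ∈ Hstar K) (hg : g ∈ geSet h) :
    g ∈ Hstar K := by
  rw [Hstar, Finset.mem_filter] at hh ⊢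
  refine ⟨Finset.mem_univ _, ?_⟩
  obtain ⟨k, hk⟩ := Function.ne_iff.mp hh.2
  have hk' : h k = true := by
    cases hkk : h k
    · exact absurd hkk hk
    · rfl
  have := mem_geSet.mp hg k hk'
  intro hcon
  rw [congrFun hcon k] at this
  exact Bool.false_ne_true this

end IdAux

theorem identifiable_iff_moment_condition (K : ℕ) (hK : 2 ≤ K)
    (𝒬 : Set (Measure (Fin K → ℝ)))
    (hprob : ∀ Q ∈ 𝒬, IsProbabilityMeasure Q)
    (hsupp : ∀ Q ∈ 𝒬, Q {x | ∀ k, x k ∈ Set.Ioc (0 : ℝ) 1} = 1) :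
    (∀ Q ∈ 𝒬, ∀ R ∈ 𝒬,
        (∀ h ∈ Hstar K, condCellProb Q h = condCellProb R h) →
        missProb Q = missProb R) ↔
    (∀ Q ∈ 𝒬, ∀ R ∈ 𝒬, ∀ A : ℝ, 0 < A →
        (∀ h ∈ Hstar K, mixedMoment Q h = A * mixedMoment R h) →
        missProb Q = missProb R) := by
  constructor
  · -- identifiability → moment condition
    intro hid Q hQ R hR A hA hm
    haveI := hprob Q hQ
    haveI := hprob R hR
    have hsQ : Q (IdAux.S K) = 1 := hsupp Q hQ
    have hsR : R (IdAux.S K) = 1 := hsupp R hR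
    -- cell probabilities are proportional on Hstar
    have hcell : ∀ h ∈ Hstar K, cellProb Q h = A * cellProb R h := by
      intro h hh
      rw [IdAux.cellProb_eq_sum Q hsQ h, IdAux.cellProb_eq_sum R hsR h, Finset.mul_sum]
      apply Finset.sum_congr rfl
      intro g hg
      rw [hm g (IdAux.geSet_mem_Hstar hh hg)]
      ring
    have hsum : 1 - missProb Q = A * (1 - missProb R) := by
      rw [← IdAux.sum_Hstar Q hsQ, ← IdAux.sum_Hstar R hsR, Finset.mul_sum]
      exact Finset.sum_congr rfl hcell
    have hposR : 0 < 1 - missProb R := IdAux.one_sub_missProb_pos R hsR hK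
    apply hid Q hQ R hR
    intro h hh
    rw [condCellProb, condCellProb, hcell h hh, hsum,
      mul_div_mul_left _ _ (ne_of_gt hA)]
  · -- moment condition → identifiability
    intro hmom Q hQ R hR hc
    haveI := hprob Q hQ
    haveI := hprob R hR
    have hsQ : Q (IdAux.S K) = 1 := hsupp Q hQ
    have hsR : R (IdAux.S K) = 1 := hsupp R hR
    have hposQ : 0 < 1 - missProb Q := IdAux.one_sub_missProb_pos Q hsQ hK
    have hposR : 0 < 1 - missProb R := IdAux.one_sub_missProb_pos R hsR hK
    set A : ℝ := (1 - missProb Q) / (1 - missProb R) with hAdef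
    have hA : 0 < A := div_pos hposQ hposR
    apply hmom Q hQ R hR A hA
    intro h hh
    have hcell : ∀ g ∈ Hstar K, cellProb Q g = A * cellProb R g := by
      intro g hg
      have h1 : cellProb Q g = condCellProb Q g * (1 - missProb Q) := by
        rw [condCellProb, div_mul_cancel₀ _ (ne_of_gt hposQ)]
      rw [h1, hc g hg, condCellProb, hAdef]
      field_simp
    rw [IdAux.mixedMoment_eq_sum Q hsQ h, IdAux.mixedMoment_eq_sum R hsR h, Finset.mul_sum]
    apply Finset.sum_congr rfl
    intro g hg
    exact hcell g (IdAux.geSet_mem_Hstar hh hg)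
end

section
/- (Theorem 2, forward direction) Let K ≥ 2 and J ≥ 1 be integers with 2J ≤ K. Let (ν_Q, λ_Q) and (ν_R, λ_R) be two J-class latent class models in Q_J (weights nonnegative summing to 1, class probabilities in (0,1], and λ_{jk} ≠ λ_{j'k} for every coordinate k whenever j ≠ j'). If there exists A > 0 such that m_{Q,h} = A·m_{R,h} for all h ∈ H*, then A = 1 and consequently π_{Q,0} = π_{R,0}. -/
/-!
Encode the mixed moments in the generating polynomial
`G(t) = Σ_h t^h m_h = Σ_j ν_j ∏_k (1 + t_k λ_{jk})`, whose constant term is `m_0 = Σ_j ν_j = 1`.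
Proportional moments on `H*` give `G_Q(t) - 1 = A (G_R(t) - 1)` for every `t`. Since `2J ≤ K`,
the first `J` coordinates of `t` can be spent on making one factor of each class of `Q` vanish
and the next `J` on each class of `R`; at such a `t` both `G_Q` and `G_R` vanish, so `A = 1`.
Then `π_0 = G(-1, …, -1)` agrees for both models.
-/

open Finset

/-- Cell probability `π_h = Σ_j ν_j ∏_k λ_{jk}^{h_k} (1-λ_{jk})^{1-h_k}` of a
    `J`-class latent class model. -/
def lcmCellProb {J K : ℕ} (ν : Fin J → ℝ) (lam : Fin J → Fin K → ℝ)
    (h : Fin K → Bool) : ℝ :=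
  ∑ j, ν j * ∏ k, (if h k then lam j k else 1 - lam j k)

/-- Mixed moment `m_h = Σ_j ν_j ∏_k λ_{jk}^{h_k}` of a `J`-class latent class
    model. -/
def lcmMoment {J K : ℕ} (ν : Fin J → ℝ) (lam : Fin J → Fin K → ℝ)
    (h : Fin K → Bool) : ℝ :=
  ∑ j, ν j * ∏ k, (if h k then lam j k else 1)

/-- Membership in the family `Q_J`: nonnegative weights summing to one, class
    probabilities in `(0,1]`, and coordinatewise distinct class probabilities. -/
def memQJ {J K : ℕ} (ν : Fin J → ℝ) (lam : Fin J → Fin K → ℝ) : Prop :=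
  (∀ j, 0 ≤ ν j) ∧ (∑ j, ν j = 1) ∧
    (∀ j k, lam j k ∈ Set.Ioc (0 : ℝ) 1) ∧
    (∀ j j', j ≠ j' → ∀ k, lam j k ≠ lam j' k)

/-- The generating polynomial `Σ_h t^h m_h` of the mixed moments, in product form. -/
def lcmGenFun {J K : ℕ} (ν : Fin J → ℝ) (lam : Fin J → Fin K → ℝ) (t : Fin K → ℝ) : ℝ :=
  ∑ j, ν j * ∏ k, (1 + t k * lam j k)

section GeneratingFunction

variable {J K : ℕ} (ν : Fin J → ℝ) (lam : Fin J → Fin K → ℝ) (t : Fin K → ℝ)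

theorem sum_monomial_mul_lcmMoment :
    ∑ h : Fin K → Bool, (∏ k, if h k then t k else 1) * lcmMoment ν lam h = lcmGenFun ν lam t := by
  simp only [lcmMoment, lcmGenFun, mul_sum]
  rw [sum_comm]
  refine sum_congr rfl fun j _ => ?_
  have hmonomial : ∀ h : Fin K → Bool,
      (∏ k, if h k then t k else 1) * (ν j * ∏ k, if h k then lam j k else 1)
        = ν j * ∏ k, if h k then t k * lam j k else 1 := fun h => by
    rw [mul_left_comm, ← prod_mul_distrib]
    congr 1
    exact prod_congr rfl fun k _ => by split_ifs <;> simp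
  simp only [hmonomial, ← mul_sum]
  congr 1
  rw [← Fintype.prod_sum (fun k (b : Bool) => if b then t k * lam j k else 1)]
  simp [add_comm]

theorem sum_Hstar_monomial_mul_lcmMoment (hν : ∑ j, ν j = 1) :
    ∑ h ∈ Hstar K, (∏ k, if h k then t k else 1) * lcmMoment ν lam h
      = lcmGenFun ν lam t - 1 := by
  have hHstar : Hstar K = {fun _ => false}ᶜ := by
    ext h
    simp [Hstar]
  rw [← sum_monomial_mul_lcmMoment, Fintype.sum_eq_add_sum_compl (fun _ => false), hHstar]
  simp [lcmMoment, hν]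

theorem lcmGenFun_eq_zero_of_forall_exists (hroot : ∀ j, ∃ k, 1 + t k * lam j k = 0) :
    lcmGenFun ν lam t = 0 :=
  sum_eq_zero fun j _ => by
    obtain ⟨k, hk⟩ := hroot j
    rw [prod_eq_zero (mem_univ k) hk, mul_zero]

theorem lcmCellProb_zero_eq_lcmGenFun :
    lcmCellProb ν lam (fun _ => false) = lcmGenFun ν lam (fun _ => -1) := by
  simp only [lcmCellProb, lcmGenFun, Bool.false_eq_true, if_false, neg_one_mul, ← sub_eq_add_neg]

end GeneratingFunction

theorem lcmGenFun_sub_one_eq_mul {J K : ℕ} {νQ νR : Fin J → ℝ} {lamQ lamR : Fin J → Fin K → ℝ}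
    {A : ℝ} (hνQ : ∑ j, νQ j = 1) (hνR : ∑ j, νR j = 1)
    (hm : ∀ h ∈ Hstar K, lcmMoment νQ lamQ h = A * lcmMoment νR lamR h) (t : Fin K → ℝ) :
    lcmGenFun νQ lamQ t - 1 = A * (lcmGenFun νR lamR t - 1) := by
  rw [← sum_Hstar_monomial_mul_lcmMoment _ _ _ hνQ, ← sum_Hstar_monomial_mul_lcmMoment _ _ _ hνR,
    mul_sum]
  exact sum_congr rfl fun h hh => by rw [hm h hh, mul_left_comm]

theorem exists_one_add_mul_eq_zero_of_injective {ι κ : Type*} {e : ι → κ}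
    (he : Function.Injective e) {c : ι → ℝ} (hc : ∀ i, c i ≠ 0) :
    ∃ t : κ → ℝ, ∀ i, 1 + t (e i) * c i = 0 :=
  ⟨Function.extend e (fun i => -(c i)⁻¹) 0, fun i => by
    rw [he.extend_apply, neg_mul, inv_mul_cancel₀ (hc i), add_neg_cancel]⟩

theorem exists_lcmGenFun_eq_zero_of_two_mul_le {J K : ℕ} (hJK : 2 * J ≤ K)
    (νQ νR : Fin J → ℝ) {lamQ lamR : Fin J → Fin K → ℝ}
    (hQ : ∀ j k, lamQ j k ≠ 0) (hR : ∀ j k, lamR j k ≠ 0) :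
    ∃ t, lcmGenFun νQ lamQ t = 0 ∧ lcmGenFun νR lamR t = 0 := by
  obtain ⟨e⟩ : Nonempty (Fin J ⊕ Fin J ↪ Fin K) :=
    Function.Embedding.nonempty_of_card_le (by simpa [two_mul] using hJK)
  obtain ⟨t, ht⟩ := exists_one_add_mul_eq_zero_of_injective e.injective
    (c := Sum.elim (fun j => lamQ j (e (.inl j))) (fun j => lamR j (e (.inr j))))
    (by rintro (j | j) <;> simp [hQ, hR])
  exact ⟨t, lcmGenFun_eq_zero_of_forall_exists _ _ _ fun j => ⟨_, ht (.inl j)⟩,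
    lcmGenFun_eq_zero_of_forall_exists _ _ _ fun j => ⟨_, ht (.inr j)⟩⟩

theorem lcm_identifiable_of_two_mul_le_general (K J : ℕ)
    (hJK : 2 * J ≤ K)
    (νQ νR : Fin J → ℝ) (lamQ lamR : Fin J → Fin K → ℝ)
    (hQ : memQJ νQ lamQ) (hR : memQJ νR lamR)
    (A : ℝ)
    (hm : ∀ h ∈ Hstar K, lcmMoment νQ lamQ h = A * lcmMoment νR lamR h) :
    A = 1 ∧ lcmCellProb νQ lamQ (fun _ => false) =
      lcmCellProb νR lamR (fun _ => false) := by
  obtain ⟨-, hνQ, hlamQ, -⟩ := hQ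
  obtain ⟨-, hνR, hlamR, -⟩ := hR
  have hG := lcmGenFun_sub_one_eq_mul hνQ hνR hm
  obtain ⟨t, htQ, htR⟩ := exists_lcmGenFun_eq_zero_of_two_mul_le hJK νQ νR
    (fun j k => (hlamQ j k).1.ne') (fun j k => (hlamR j k).1.ne')
  have hA : A = 1 := by simpa [htQ, htR, eq_comm] using hG t
  refine ⟨hA, ?_⟩
  rw [lcmCellProb_zero_eq_lcmGenFun, lcmCellProb_zero_eq_lcmGenFun]
  simpa [hA] using hG fun _ => -1

/-- Theorem 2, forward direction: if `2J ≤ K` and two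
    `J`-class latent class models in `Q_J` have positively proportional mixed
    moments on `H*` with constant `A > 0`, then `A = 1` and consequently the
    missing cell probabilities agree. -/
theorem lcm_identifiable_of_two_mul_le (K J : ℕ) (hK : 2 ≤ K) (hJ : 1 ≤ J)
    (hJK : 2 * J ≤ K)
    (νQ νR : Fin J → ℝ) (lamQ lamR : Fin J → Fin K → ℝ)
    (hQ : memQJ νQ lamQ) (hR : memQJ νR lamR)
    (A : ℝ) (hA : 0 < A)
    (hm : ∀ h ∈ Hstar K, lcmMoment νQ lamQ h = A * lcmMoment νR lamR h) :
    A = 1 ∧ lcmCellProb νQ lamQ (fun _ => false) =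
      lcmCellProb νR lamR (fun _ => false) :=
  lcm_identifiable_of_two_mul_le_general K J hJK νQ νR lamQ lamR hQ hR A hm
end

section
/- (Appendix 1) Let K ≥ 2 and let x_{ℓk} ∈ (0,1) for ℓ = 1,…,K and k = 1,…,K be real numbers such that for every coordinate k, x_{ℓk} ≠ x_{ℓ'k} whenever ℓ ≠ ℓ'. Then the (2^K − 1) × K matrix X^K whose rows are indexed by h ∈ H* and whose (h, ℓ) entry is ∏_{k=1}^K x_{ℓk}^{h_k} has full column rank K; equivalently, the K vectors (∏_{k=1}^K x_{ℓk}^{h_k})_{h ∈ H*}, ℓ = 1,…,K, are linearly independent in ℝ^{2^K−1}. -/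
open Finset

/-- Appendix 1: given reals `x_{ℓk} ∈ (0,1)` (`ℓ, k = 1,…,K`,
    `K ≥ 2`) that are pairwise distinct in each coordinate `k`, the `K` vectors
    `(∏_k x_{ℓk}^{h_k})_{h ∈ H*}`, `ℓ = 1,…,K`, are linearly independent in
    `ℝ^{2^K−1}`; i.e. the matrix `X^K` has full column rank `K`. -/
theorem monomial_vectors_linearIndependent (K : ℕ) (hK : 2 ≤ K)
    (x : Fin K → Fin K → ℝ)
    (hx : ∀ l k, x l k ∈ Set.Ioo (0 : ℝ) 1)
    (hdist : ∀ l l', l ≠ l' → ∀ k, x l k ≠ x l' k) :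
    LinearIndependent ℝ
      (fun l : Fin K =>
        (fun h : {h : Fin K → Bool // h ≠ fun _ => false} =>
          ∏ k, (if h.1 k then x l k else 1) : _ → ℝ)) := by
  rw [Fintype.linearIndependent_iff]
  intro c hc l₀
  -- each nonzero row gives a vanishing linear relation
  have hrow : ∀ h : Fin K → Bool, h ≠ (fun _ => false) →
      ∑ l, c l * ∏ k, (if h k then x l k else 1) = 0 := by
    intro h hne
    have := congrFun hc ⟨h, hne⟩
    simpa using this
  -- the auxiliary weights
  set ψ : Fin K → Bool → ℝ :=
    fun k b => if b then 1 else (if k = l₀ then 0 else -(x k k)) with hψ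
  -- the product functional applied to column l
  set P : Fin K → ℝ :=
    fun l => ∏ k, (if k = l₀ then x l l₀ else x l k - x k k) with hP
  have hPsum : ∀ l, P l = ∑ h : Fin K → Bool,
      (∏ k, ψ k (h k)) * ∏ k, (if h k then x l k else 1) := by
    intro l
    have expand : ∀ k : Fin K, (if k = l₀ then x l l₀ else x l k - x k k)
        = ∑ b : Bool, ψ k b * (if b then x l k else 1) := by
      intro k
      by_cases hk : k = l₀ <;> simp [hψ, hk, Fintype.sum_bool] <;> ring
    calc P l = ∏ k, ∑ b : Bool, ψ k b * (if b then x l k else 1) := by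
          rw [hP]; exact Finset.prod_congr rfl fun k _ => expand k
      _ = ∑ h : Fin K → Bool, ∏ k, ψ k (h k) * (if h k then x l k else 1) :=
          Fintype.prod_sum _
      _ = ∑ h : Fin K → Bool,
          (∏ k, ψ k (h k)) * ∏ k, (if h k then x l k else 1) := by
          exact Finset.sum_congr rfl fun h _ => by rw [Finset.prod_mul_distrib]
  -- the functional kills the whole relation
  have hzero : ∑ l, c l * P l = 0 := by
    have : ∑ l, c l * P l
        = ∑ h : Fin K → Bool,
            (∏ k, ψ k (h k)) * ∑ l, c l * ∏ k, (if h k then x l k else 1) := by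
      calc ∑ l, c l * P l
          = ∑ l, ∑ h : Fin K → Bool,
              (∏ k, ψ k (h k)) * (c l * ∏ k, (if h k then x l k else 1)) := by
            refine Finset.sum_congr rfl fun l _ => ?_
            rw [hPsum l, Finset.mul_sum]
            exact Finset.sum_congr rfl fun h _ => by ring
        _ = ∑ h : Fin K → Bool, ∑ l,
              (∏ k, ψ k (h k)) * (c l * ∏ k, (if h k then x l k else 1)) :=
            Finset.sum_comm
        _ = ∑ h : Fin K → Bool,
              (∏ k, ψ k (h k)) * ∑ l, c l * ∏ k, (if h k then x l k else 1) :=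
            Finset.sum_congr rfl fun h _ => (Finset.mul_sum _ _ _).symm
    rw [this]
    refine Finset.sum_eq_zero fun h _ => ?_
    by_cases hne : h = (fun _ => false)
    · have : (∏ k, ψ k (h k)) = 0 := by
        refine Finset.prod_eq_zero (Finset.mem_univ l₀) ?_
        simp [hψ, hne]
      rw [this, zero_mul]
    · rw [hrow h hne, mul_zero]
  -- P vanishes off l₀
  have hPoff : ∀ l, l ≠ l₀ → P l = 0 := by
    intro l hl
    refine Finset.prod_eq_zero (Finset.mem_univ l) ?_
    simp [hl]
  -- P l₀ ≠ 0
  have hPl₀ : P l₀ ≠ 0 := by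
    rw [hP]
    refine Finset.prod_ne_zero_iff.2 fun k _ => ?_
    by_cases hk : k = l₀
    · rw [if_pos hk]; exact (hx l₀ l₀).1.ne'
    · rw [if_neg hk]
      exact sub_ne_zero.2 (hdist l₀ k (fun h => hk h.symm) k)
  have hsingle : (∑ l, c l * P l) = c l₀ * P l₀ :=
    Finset.sum_eq_single l₀ (fun l _ hl => by rw [hPoff l hl, mul_zero])
      (fun h => absurd (Finset.mem_univ l₀) h)
  have : c l₀ * P l₀ = 0 := hsingle ▸ hzero
  exact (mul_eq_zero.1 this).resolve_right hPl₀
end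

section
/- (Appendix 2) Let J ≥ 1 and K ≥ 2 be integers with K < 2J, and let α be a real number with 0 < α < 1/(2J). Define ν_{Q,j} = C(2J, 2j)/(2^{2J−1} − 1) and λ_{Q,jk} = α·(2j) for j = 1,…,J and k = 1,…,K, and define ν_{R,j} = C(2J, 2j−1)/2^{2J−1} and λ_{R,jk} = α·(2j−1) for j = 1,…,J and k = 1,…,K, where C(n,i) denotes the binomial coefficient. Then for every h ∈ H*, Σ_{j=1}^J ν_{Q,j} ∏_{k=1}^K λ_{Q,jk}^{h_k} = A · Σ_{j=1}^J ν_{R,j} ∏_{k=1}^K λ_{R,jk}^{h_k}, where A = 2^{2J−1}/(2^{2J−1} − 1) ≠ 1. -/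
open Finset

open Polynomial in
lemma alt_sum_poly : ∀ (n : ℕ) (p : Polynomial ℝ), p.natDegree < n →
    ∑ k ∈ Finset.range (n + 1), (-1 : ℝ) ^ k * (n.choose k) * p.eval (k : ℝ) = 0 := by
  intro n
  induction n with
  | zero => intro p hp; exact absurd hp (Nat.not_lt_zero _)
  | succ n ih =>
    intro p hp
    set q : Polynomial ℝ := p.comp (X + C 1) - p with hqdef
    have hqe : ∀ x : ℝ, q.eval x = p.eval (x + 1) - p.eval x := by
      intro x; simp [hqdef, Polynomial.eval_comp]
    have hT : ∑ k ∈ Finset.range (n + 1), (-1 : ℝ) ^ k * (n.choose k) * q.eval (k : ℝ) = 0 := by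
      by_cases hq0 : q = 0
      · simp [hq0]
      · apply ih
        have h1 : (X + C (1 : ℝ)).natDegree = 1 := natDegree_X_add_C 1
        have hcd : (p.comp (X + C 1)).natDegree = p.natDegree := by
          rw [natDegree_comp, h1, mul_one]
        by_cases h0 : p.natDegree = 0
        · obtain ⟨c, rfl⟩ := Polynomial.natDegree_eq_zero.mp h0
          exact absurd (by simp [hqdef]) hq0
        · have hp0 : p ≠ 0 := fun h => h0 (by simp [h])
          have hc0 : p.comp (X + C 1) ≠ 0 := by
            simpa using (Polynomial.comp_X_add_C_ne_zero_iff (t := (1:ℝ))).mpr hp0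
          have hlc : (p.comp (X + C 1)).leadingCoeff = p.leadingCoeff := by
            rw [leadingCoeff_comp (by rw [h1]; exact one_ne_zero),
              leadingCoeff_X_add_C, one_pow, mul_one]
          have hdeg : (p.comp (X + C 1)).degree = p.degree := by
            rw [Polynomial.degree_eq_natDegree hc0, Polynomial.degree_eq_natDegree hp0, hcd]
          have := Polynomial.degree_sub_lt hdeg hc0 hlc
          have hlt : q.natDegree < (p.comp (X + C 1)).natDegree :=
            Polynomial.natDegree_lt_natDegree hq0 this
          rw [hcd] at hlt
          omega
    -- T1 = T0
    have hT' : ∑ k ∈ Finset.range (n + 1), (-1 : ℝ) ^ k * (n.choose k) * p.eval ((k : ℝ) + 1)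
        = ∑ k ∈ Finset.range (n + 1), (-1 : ℝ) ^ k * (n.choose k) * p.eval (k : ℝ) := by
      have h2 : ∑ k ∈ Finset.range (n + 1),
          ((-1 : ℝ) ^ k * (n.choose k) * p.eval ((k : ℝ) + 1)
            - (-1 : ℝ) ^ k * (n.choose k) * p.eval (k : ℝ)) = 0 := by
        rw [← hT]; apply Finset.sum_congr rfl; intro k _; rw [hqe]; ring
      rw [Finset.sum_sub_distrib] at h2
      linarith
    -- U = p 0 - T0
    have hU : ∑ i ∈ Finset.range (n + 1), (-1 : ℝ) ^ i * (n.choose (i + 1)) * p.eval ((i : ℝ) + 1)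
        = p.eval 0 - ∑ k ∈ Finset.range (n + 1), (-1 : ℝ) ^ k * (n.choose k) * p.eval (k : ℝ) := by
      have hV : ∑ k ∈ Finset.range (n + 2), (-1 : ℝ) ^ k * (n.choose k) * p.eval (k : ℝ)
          = ∑ k ∈ Finset.range (n + 1), (-1 : ℝ) ^ k * (n.choose k) * p.eval (k : ℝ) := by
        rw [Finset.sum_range_succ, Nat.choose_succ_self]
        simp
      rw [Finset.sum_range_succ'] at hV
      push_cast at hV ⊢
      have : ∀ i ∈ Finset.range (n + 1),
          (-1 : ℝ) ^ (i + 1) * (n.choose (i + 1)) * p.eval ((i : ℝ) + 1)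
          = -((-1 : ℝ) ^ i * (n.choose (i + 1)) * p.eval ((i : ℝ) + 1)) := by
        intro i _; ring
      rw [Finset.sum_congr rfl this, Finset.sum_neg_distrib] at hV
      simp at hV
      linarith
    rw [Finset.sum_range_succ']
    have hsplit : ∀ i ∈ Finset.range (n + 1),
        (-1 : ℝ) ^ (i + 1) * ((n + 1).choose (i + 1)) * p.eval (((i + 1 : ℕ) : ℝ))
        = -((-1 : ℝ) ^ i * (n.choose i) * p.eval ((i : ℝ) + 1))
          - (-1 : ℝ) ^ i * (n.choose (i + 1)) * p.eval ((i : ℝ) + 1) := by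
      intro i _
      rw [Nat.choose_succ_succ]
      push_cast
      ring
    rw [Finset.sum_congr rfl hsplit, Finset.sum_sub_distrib, Finset.sum_neg_distrib]
    simp only [Nat.cast_zero, pow_zero, Nat.choose_zero_right, Nat.cast_one, one_mul, mul_one]
    rw [hT', hU]
    ring

lemma sum_range_two_mul_pair (n : ℕ) (f : ℕ → ℝ) :
    ∑ k ∈ Finset.range (2 * n), f k = ∑ j ∈ Finset.range n, (f (2 * j) + f (2 * j + 1)) := by
  induction n with
  | zero => simp
  | succ n ih =>
    have h2 : 2 * (n + 1) = 2 * n + 1 + 1 := by ring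
    rw [h2, Finset.sum_range_succ, Finset.sum_range_succ, Finset.sum_range_succ, ih]
    ring

lemma core_identity (J s : ℕ) (hs1 : 1 ≤ s) (hs : s < 2 * J) :
    ∑ j ∈ Finset.range J, (((2 * J).choose (2 * (j + 1)) : ℝ)) * (2 * (j : ℝ) + 2) ^ s
    = ∑ j ∈ Finset.range J, (((2 * J).choose (2 * (j + 1) - 1) : ℝ)) * (2 * (j : ℝ) + 1) ^ s := by
  have h0 := alt_sum_poly (2 * J) (Polynomial.X ^ s)
    (by rw [Polynomial.natDegree_X_pow]; exact hs)
  simp only [Polynomial.eval_pow, Polynomial.eval_X] at h0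
  rw [Finset.sum_range_succ'] at h0
  have hz : (-1 : ℝ) ^ 0 * ((2 * J).choose 0 : ℝ) * ((0 : ℕ) : ℝ) ^ s = 0 := by
    simp [zero_pow (by omega : s ≠ 0)]
  rw [hz, add_zero, sum_range_two_mul_pair] at h0
  have hterm : ∀ j ∈ Finset.range J,
      ((-1 : ℝ) ^ (2 * j + 1) * ((2 * J).choose (2 * j + 1) : ℝ) * ((2 * j + 1 : ℕ) : ℝ) ^ s
        + (-1 : ℝ) ^ (2 * j + 1 + 1) * ((2 * J).choose (2 * j + 1 + 1) : ℝ)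
          * ((2 * j + 1 + 1 : ℕ) : ℝ) ^ s)
      = ((2 * J).choose (2 * (j + 1)) : ℝ) * (2 * (j : ℝ) + 2) ^ s
        - ((2 * J).choose (2 * (j + 1) - 1) : ℝ) * (2 * (j : ℝ) + 1) ^ s := by
    intro j _
    have e1 : 2 * (j + 1) = 2 * j + 1 + 1 := by ring
    have e2 : 2 * (j + 1) - 1 = 2 * j + 1 := by omega
    have o1 : (-1 : ℝ) ^ (2 * j + 1) = -1 := (Odd.neg_one_pow ⟨j, by ring⟩)
    have o2 : (-1 : ℝ) ^ (2 * j + 1 + 1) = 1 := (Even.neg_one_pow ⟨j + 1, by ring⟩)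
    rw [e1]
    have e3 : 2 * j + 1 + 1 - 1 = 2 * j + 1 := by omega
    rw [e3, o1, o2]
    push_cast
    ring
  rw [Finset.sum_congr rfl hterm, Finset.sum_sub_distrib] at h0
  linarith


/-- Appendix 2: with `K < 2J`, `0 < α < 1/(2J)`, weights
    `ν_{Q,j} = C(2J,2j)/(2^{2J−1}−1)`, `ν_{R,j} = C(2J,2j−1)/2^{2J−1}` and
    class probabilities `λ_{Q,jk} = α(2j)`, `λ_{R,jk} = α(2j−1)`, the mixed
    moments satisfy `m_{Q,h} = A m_{R,h}` for all `h ∈ H*`, where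
    `A = 2^{2J−1}/(2^{2J−1}−1) ≠ 1`. -/
theorem counterexample_moments_proportional (K J : ℕ) (hK : 2 ≤ K) (hJ : 1 ≤ J)
    (hJK : K < 2 * J) (α : ℝ) (hα0 : 0 < α) (hα1 : α < 1 / (2 * J)) :
    ((2 : ℝ) ^ (2 * J - 1) / ((2 : ℝ) ^ (2 * J - 1) - 1) ≠ 1) ∧
    ∀ h ∈ Hstar K,
      (∑ j : Fin J, ((Nat.choose (2 * J) (2 * ((j : ℕ) + 1)) : ℝ) /
            ((2 : ℝ) ^ (2 * J - 1) - 1)) *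
          ∏ k, (if h k then α * (2 * ((j : ℕ) + 1)) else 1)) =
      ((2 : ℝ) ^ (2 * J - 1) / ((2 : ℝ) ^ (2 * J - 1) - 1)) *
        (∑ j : Fin J, ((Nat.choose (2 * J) (2 * ((j : ℕ) + 1) - 1) : ℝ) /
              (2 : ℝ) ^ (2 * J - 1)) *
            ∏ k, (if h k then α * (2 * ((j : ℕ) + 1) - 1) else 1)) := by
  set m : ℕ := 2 * J - 1 with hm
  have hm1 : 1 ≤ m := by omega
  have h2m : (1 : ℝ) < (2 : ℝ) ^ m := by
    apply one_lt_pow₀ (by norm_num) (by omega)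
  have hD : (2 : ℝ) ^ m - 1 ≠ 0 := by linarith
  have h2m0 : (2 : ℝ) ^ m ≠ 0 := by positivity
  constructor
  · intro heq
    rw [div_eq_one_iff_eq hD] at heq
    linarith
  · intro h hh
    have hne : h ≠ fun _ => false := by
      simpa [Hstar] using hh
    set s : ℕ := (Finset.univ.filter (fun k => h k = true)).card with hs
    have hprod : ∀ c : ℝ, (∏ k, if h k then c else 1) = c ^ s := by
      intro c
      rw [← Finset.prod_filter, Finset.prod_const]
    have hs1 : 1 ≤ s := by
      have hex : ∃ k, h k = true := by
        by_contra hc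
        push_neg at hc
        exact hne (funext fun k => by simpa using hc k)
      obtain ⟨k, hk⟩ := hex
      exact Finset.card_pos.mpr ⟨k, by simp [hk]⟩
    have hsK : s ≤ K := by
      have := Finset.card_filter_le Finset.univ (fun k => h k = true)
      simpa using this
    have hs2J : s < 2 * J := lt_of_le_of_lt hsK hJK
    have key := core_identity J s hs1 hs2J
    calc (∑ j : Fin J, ((Nat.choose (2 * J) (2 * ((j : ℕ) + 1)) : ℝ) /
            ((2 : ℝ) ^ m - 1)) *
          ∏ k, (if h k then α * (2 * ((j : ℕ) + 1)) else 1))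
        = (α ^ s / ((2 : ℝ) ^ m - 1)) * ∑ j ∈ Finset.range J,
            (((2 * J).choose (2 * (j + 1)) : ℝ)) * (2 * (j : ℝ) + 2) ^ s := by
          rw [Finset.mul_sum, ← Fin.sum_univ_eq_sum_range]
          apply Finset.sum_congr rfl
          intro j _
          rw [hprod, mul_pow]
          push_cast
          ring
      _ = (α ^ s / ((2 : ℝ) ^ m - 1)) * ∑ j ∈ Finset.range J,
            (((2 * J).choose (2 * (j + 1) - 1) : ℝ)) * (2 * (j : ℝ) + 1) ^ s := by rw [key]
      _ = ((2 : ℝ) ^ m / ((2 : ℝ) ^ m - 1)) *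
        (∑ j : Fin J, ((Nat.choose (2 * J) (2 * ((j : ℕ) + 1) - 1) : ℝ) /
              (2 : ℝ) ^ m) *
            ∏ k, (if h k then α * (2 * ((j : ℕ) + 1) - 1) else 1)) := by
          rw [Finset.mul_sum, Finset.mul_sum, ← Fin.sum_univ_eq_sum_range]
          apply Finset.sum_congr rfl
          intro j _
          rw [hprod, mul_pow]
          have e2 : 2 * ((j : ℕ) + 1) - 1 = 2 * (j : ℕ) + 1 := by omega
          rw [e2]
          have ec : (α * (2 * (((j : ℕ) : ℝ) + 1) - 1)) ^ s = α ^ s * (2 * ((j : ℕ) : ℝ) + 1) ^ s := by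
            rw [← mul_pow]; ring_nf
          push_cast
          field_simp
          ring
end

section
/- Let K = 2. Consider the two-class latent class model Q with weights ν_Q = (1/2, 1/2) and class sampling probabilities λ_{Q,1} = (99/400, 99/400), λ_{Q,2} = (297/400, 297/400), and the two-class latent class model R with weights ν_R = (6/7, 1/7) and class sampling probabilities λ_{R,1} = (99/200, 99/200), λ_{R,2} = (99/100, 99/100). Then the conditional cell probabilities of Q and R agree exactly, i.e. π̃_{Q,h} = π̃_{R,h} for every h ∈ H* = {(0,1),(1,0),(1,1)}, while the missing cell probabilities differ: π_{Q,0} ≠ π_{R,0}. -/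
open Finset

private lemma allFalse2 {h : Fin 2 → Bool} (h0 : h 0 = false) (h1 : h 1 = false) :
    h = fun _ => false :=
  funext fun i => by fin_cases i <;> assumption

/-- Missing cell probability `π_0` of a latent class model. -/
def lcmMissProb {J K : ℕ} (ν : Fin J → ℝ) (lam : Fin J → Fin K → ℝ) : ℝ :=
  lcmCellProb ν lam (fun _ => false)

/-- Conditional cell probability `π̃_h = π_h / (1 − π_0)`. -/
noncomputable def lcmCondCellProb {J K : ℕ} (ν : Fin J → ℝ)
    (lam : Fin J → Fin K → ℝ) (h : Fin K → Bool) : ℝ :=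
  lcmCellProb ν lam h / (1 - lcmMissProb ν lam)

/-- Section 4.2, Table 1: the two explicit two-class latent
    class models `Q` (weights `(1/2, 1/2)`, probabilities `0.2475` and
    `0.7425` for both sources) and `R` (weights `(6/7, 1/7)`, probabilities
    `0.495` and `0.99` for both sources) on `K = 2` sources have identical
    conditional cell probabilities but different missing cell probabilities. -/
theorem table1_nonidentifiability_example :
    (∀ h ∈ Hstar 2,
        lcmCondCellProb (![1 / 2, 1 / 2] : Fin 2 → ℝ)
            (![![99 / 400, 99 / 400], ![297 / 400, 297 / 400]] :
              Fin 2 → Fin 2 → ℝ) h =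
          lcmCondCellProb (![6 / 7, 1 / 7] : Fin 2 → ℝ)
            (![![99 / 200, 99 / 200], ![99 / 100, 99 / 100]] :
              Fin 2 → Fin 2 → ℝ) h) ∧
    lcmMissProb (![1 / 2, 1 / 2] : Fin 2 → ℝ)
        (![![99 / 400, 99 / 400], ![297 / 400, 297 / 400]] :
          Fin 2 → Fin 2 → ℝ) ≠
      lcmMissProb (![6 / 7, 1 / 7] : Fin 2 → ℝ)
        (![![99 / 200, 99 / 200], ![99 / 100, 99 / 100]] :
          Fin 2 → Fin 2 → ℝ) := by
  constructor
  · intro h hm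
    simp only [Hstar, mem_filter] at hm
    simp only [lcmCondCellProb, lcmCellProb, lcmMissProb, Fin.sum_univ_two,
      Fin.prod_univ_two, Matrix.cons_val_zero, Matrix.cons_val_one, Matrix.head_cons,
      Matrix.head_fin_const]
    rcases Bool.eq_false_or_eq_true (h 0) with h0 | h0 <;>
      rcases Bool.eq_false_or_eq_true (h 1) with h1 | h1 <;>
      first
        | exact absurd (allFalse2 h0 h1) hm.2
        | (simp [h0, h1]; norm_num)
  · simp only [lcmMissProb, lcmCellProb, Fin.sum_univ_two, Fin.prod_univ_two,
      Matrix.cons_val_zero, Matrix.cons_val_one, Matrix.head_cons, Matrix.head_fin_const]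
    norm_num
end
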